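/- arXiv:2402.00962 — 2 statements merged into one kernel-verified Lean document; each statement's English description precedes it below -/
import Mathlib

section
/- Let F, G : Type u ⥤ Type u be endofunctors, α : F ⟶ G an epi natural transformation, and ⊑ an order on G, with induced order ⊑^{α−} on F given by u ⊑^{α−}_X u' iff α.app X u ⊑_X α.app X u'. Then for every relation R : X₁ → X₂ → Prop and all u : F.obj X₁, v : F.obj X₂: Rel(F)_{⊑^{α−}}(R) (u, v) holds iff Rel(G)_⊑(R) (α.app X₁ u, α.app X₂ v) holds. -/
open CategoryTheory

universe u

/-- Relation lifting `Rel(F)(R)`. -/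
def RelLift (F : Type u ⥤ Type u) {X Y : Type u} (R : X → Y → Prop)
    (u : F.obj X) (v : F.obj Y) : Prop :=
  ∃ w : F.obj {p : X × Y // R p.1 p.2},
    F.map (TypeCat.ofHom (fun (p : {p : X × Y // R p.1 p.2}) => p.1.1)) w = u ∧
      F.map (TypeCat.ofHom (fun (p : {p : X × Y // R p.1 p.2}) => p.1.2)) w = v

/-- `R` is an `F`-bisimulation between coalgebras `c` and `d`. -/
def IsBisimulation (F : Type u ⥤ Type u) {X Y : Type u}
    (c : X → F.obj X) (d : Y → F.obj Y) (R : X → Y → Prop) : Prop :=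
  ∀ x y, R x y → RelLift F R (c x) (d y)

/-- Order-enriched relation lifting `Rel(F)_⊑(R)`. -/
def RelLiftOrd (F : Type u ⥤ Type u) (r : ∀ X : Type u, F.obj X → F.obj X → Prop)
    {X Y : Type u} (R : X → Y → Prop) (u : F.obj X) (v : F.obj Y) : Prop :=
  ∃ w : F.obj {p : X × Y // R p.1 p.2},
    r X u (F.map (TypeCat.ofHom (fun (p : {p : X × Y // R p.1 p.2}) => p.1.1)) w) ∧
      r Y (F.map (TypeCat.ofHom (fun (p : {p : X × Y // R p.1 p.2}) => p.1.2)) w) v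

/-- `R` is a `⊑`-simulation between coalgebras `c` and `d`. -/
def IsSimulation (F : Type u ⥤ Type u) (r : ∀ X : Type u, F.obj X → F.obj X → Prop)
    {X Y : Type u} (c : X → F.obj X) (d : Y → F.obj Y) (R : X → Y → Prop) : Prop :=
  ∀ x y, R x y → RelLiftOrd F r R (c x) (d y)

/-- The kernel equivalence `≡^α` of a natural transformation `α : F ⟶ G`. -/
def kernelRel {F G : Type u ⥤ Type u} (α : F ⟶ G) (X : Type u) :
    F.obj X → F.obj X → Prop :=
  fun u u' => α.app X u = α.app X u'

/-- `r` is an order on the functor `F`: a functorial family of preorders. -/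
def IsFunctorOrder (F : Type u ⥤ Type u)
    (r : ∀ X : Type u, F.obj X → F.obj X → Prop) : Prop :=
  (∀ (X : Type u) (u : F.obj X), r X u u) ∧
  (∀ (X : Type u) (u v w : F.obj X), r X u v → r X v w → r X u w) ∧
  (∀ (X Y : Type u) (f : X → Y) (u u' : F.obj X), r X u u' → r Y (F.map (TypeCat.ofHom f) u) (F.map (TypeCat.ofHom f) u'))

/-- The induced order `⊑^{α−}`. -/
def orderComap {F G : Type u ⥤ Type u} (α : F ⟶ G) (r : ∀ X : Type u, G.obj X → G.obj X → Prop)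
    (X : Type u) : F.obj X → F.obj X → Prop :=
  fun u u' => r X (α.app X u) (α.app X u')

/-- By naturality, `w` witnesses `Rel(F)_{⊑^{α−}}(R)(u, v)` exactly when `α w` witnesses
`Rel(G)_⊑(R)(α u, α v)`; surjectivity of `α` on `⟨R⟩` then lets every witness in `G` be pulled
back to `F`. -/
theorem relLiftOrd_orderComap_iff {F G : Type u ⥤ Type u} (α : F ⟶ G)
    (r : ∀ X : Type u, G.obj X → G.obj X → Prop) {X₁ X₂ : Type u} (R : X₁ → X₂ → Prop)
    (hsurj : Function.Surjective (α.app {p : X₁ × X₂ // R p.1 p.2}))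
    (u : F.obj X₁) (v : F.obj X₂) :
    RelLiftOrd F (orderComap α r) R u v ↔ RelLiftOrd G r R (α.app X₁ u) (α.app X₂ v) := by
  simp only [RelLiftOrd, orderComap, NatTrans.naturality_apply]
  rw [hsurj.exists]

theorem relLiftOrd_induced_iff_general {F G : Type u ⥤ Type u} (α : F ⟶ G)
    (hepi : ∀ X : Type u, Function.Surjective (α.app X))
    (r : ∀ X : Type u, G.obj X → G.obj X → Prop)
    {X₁ X₂ : Type u} (R : X₁ → X₂ → Prop) (u : F.obj X₁) (v : F.obj X₂) :
    RelLiftOrd F (fun X u u' => r X (α.app X u) (α.app X u')) R u v ↔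
      RelLiftOrd G r R (α.app X₁ u) (α.app X₂ v) :=
  relLiftOrd_orderComap_iff α r R (hepi _) u v

/-- for an epi `α : F ⟶ G` and an order `⊑` on `G`, the lifting of the
induced order `⊑^{α−}` on `F` corresponds exactly to the `⊑`-lifting on `G` through `α`. -/
theorem relLiftOrd_induced_iff {F G : Type u ⥤ Type u} (α : F ⟶ G)
    (hepi : ∀ X : Type u, Function.Surjective (α.app X))
    (r : ∀ X : Type u, G.obj X → G.obj X → Prop) (hr : IsFunctorOrder G r)
    {X₁ X₂ : Type u} (R : X₁ → X₂ → Prop) (u : F.obj X₁) (v : F.obj X₂) :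
    RelLiftOrd F (fun X u u' => r X (α.app X u) (α.app X u')) R u v ↔
      RelLiftOrd G r R (α.app X₁ u) (α.app X₂ v) :=
  relLiftOrd_induced_iff_general α hepi r R u v
end

section
/- Let F, G : Type u ⥤ Type u be endofunctors, α : F ⟶ G an epi natural transformation, ⊑ an order on G, b₁ : X₁ → G.obj X₁ and b₂ : X₂ → G.obj X₂ G-coalgebras, and a₁, a₂ any F-representations of b₁ and b₂. Then a relation R : X₁ → X₂ → Prop is a ⊑-simulation between b₁ and b₂ iff it is a ⊑^{α−}-simulation between a₁ and a₂, where ⊑^{α−} is the induced order on F given by u ⊑^{α−}_X u' iff α.app X u ⊑_X α.app X u'. -/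
/-!
By naturality of `α`, a witness `w : F.obj ⟨R⟩` for the `⊑^{α−}`-lifting of `u, v` is exactly
a witness `α w` for the `⊑`-lifting of `α u, α v`; since `α` is epi, every `G`-witness is of
this form.
-/

open CategoryTheory

universe u

variable {F G : Type u ⥤ Type u}

def inducedOrder (α : F ⟶ G) (r : ∀ X : Type u, G.obj X → G.obj X → Prop) :
    ∀ X : Type u, F.obj X → F.obj X → Prop :=
  fun X u u' => r X (α.app X u) (α.app X u')

theorem relLiftOrd_inducedOrder_iff {α : F ⟶ G}
    (hα : ∀ X : Type u, Function.Surjective (α.app X))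
    (r : ∀ X : Type u, G.obj X → G.obj X → Prop) {X Y : Type u} (R : X → Y → Prop)
    (u : F.obj X) (v : F.obj Y) :
    RelLiftOrd F (inducedOrder α r) R u v ↔ RelLiftOrd G r R (α.app X u) (α.app Y v) := by
  simp only [RelLiftOrd, inducedOrder, NatTrans.naturality_apply]
  exact ((hα _).exists (p := fun w => r X _ _ ∧ r Y _ _)).symm

theorem isSimulation_inducedOrder_iff {α : F ⟶ G}
    (hα : ∀ X : Type u, Function.Surjective (α.app X))
    (r : ∀ X : Type u, G.obj X → G.obj X → Prop) {X₁ X₂ : Type u}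
    (a₁ : X₁ → F.obj X₁) (a₂ : X₂ → F.obj X₂) (R : X₁ → X₂ → Prop) :
    IsSimulation F (inducedOrder α r) a₁ a₂ R ↔
      IsSimulation G r (α.app X₁ ∘ a₁) (α.app X₂ ∘ a₂) R := by
  simp only [IsSimulation, relLiftOrd_inducedOrder_iff hα, Function.comp_apply]

theorem simulation_iff_induced_simulation_general {F G : Type u ⥤ Type u} (α : F ⟶ G)
    (hepi : ∀ X : Type u, Function.Surjective (α.app X))
    (r : ∀ X : Type u, G.obj X → G.obj X → Prop)
    {X₁ X₂ : Type u} (b₁ : X₁ → G.obj X₁) (b₂ : X₂ → G.obj X₂)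
    (a₁ : X₁ → F.obj X₁) (a₂ : X₂ → F.obj X₂)
    (h₁ : α.app X₁ ∘ a₁ = b₁) (h₂ : α.app X₂ ∘ a₂ = b₂)
    (R : X₁ → X₂ → Prop) :
    IsSimulation G r b₁ b₂ R ↔
      IsSimulation F (fun X u u' => r X (α.app X u) (α.app X u')) a₁ a₂ R := by
  subst h₁ h₂
  exact (isSimulation_inducedOrder_iff hepi r a₁ a₂ R).symm

/-- for an epi `α : F ⟶ G` and an order `⊑` on `G`, the `⊑`-simulations
between `b₁` and `b₂` are precisely the `⊑^{α−}`-simulations between any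
`F`-representations `a₁`, `a₂` of them. -/
theorem simulation_iff_induced_simulation {F G : Type u ⥤ Type u} (α : F ⟶ G)
    (hepi : ∀ X : Type u, Function.Surjective (α.app X))
    (r : ∀ X : Type u, G.obj X → G.obj X → Prop) (hr : IsFunctorOrder G r)
    {X₁ X₂ : Type u} (b₁ : X₁ → G.obj X₁) (b₂ : X₂ → G.obj X₂)
    (a₁ : X₁ → F.obj X₁) (a₂ : X₂ → F.obj X₂)
    (h₁ : α.app X₁ ∘ a₁ = b₁) (h₂ : α.app X₂ ∘ a₂ = b₂)
    (R : X₁ → X₂ → Prop) :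
    IsSimulation G r b₁ b₂ R ↔
      IsSimulation F (fun X u u' => r X (α.app X u) (α.app X u')) a₁ a₂ R :=
  simulation_iff_induced_simulation_general α hepi r b₁ b₂ a₁ a₂ h₁ h₂ R
end
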